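/- For k ∈ (0,1), the complete elliptic integral of the second kind satisfies E'(k) = (E(k) − K(k))/k, where K and E are the complete elliptic integrals of the first and second kind. -/

import Mathlib

/-! Differentiate under the integral sign. The `k`-derivative of the integrand of `E` is
`-k t² / √((1 - k²t²)(1 - t²))`; for `k` in a compact subinterval of `(-1, 1)` it is dominated by
`C / √(1 - t)`, which is integrable on `[0, 1]`. Multiplied by `k` it is exactly the integrand of
`E` minus the integrand of `K`. -/

open MeasureTheory Set Real
open scoped Interval

/-- Complete elliptic integral of the first kind. -/
noncomputable def ellK (k : ℝ) : ℝ :=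
  ∫ t in (0:ℝ)..1, 1 / Real.sqrt ((1 - t ^ 2) * (1 - k ^ 2 * t ^ 2))

/-- Complete elliptic integral of the second kind. -/
noncomputable def ellE (k : ℝ) : ℝ :=
  ∫ t in (0:ℝ)..1, Real.sqrt ((1 - k ^ 2 * t ^ 2) / (1 - t ^ 2))

lemma ae_mem_Ioo_of_mem_uIoc {μ : Measure ℝ} [NullSingletonClass μ] {a b : ℝ} (hab : a ≤ b) :
    ∀ᵐ t ∂μ, t ∈ Ι a b → t ∈ Ioo a b := by
  filter_upwards [μ.ae_ne b] with t htb ht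
  rw [uIoc_of_le hab] at ht
  exact ⟨ht.1, lt_of_le_of_ne ht.2 htb⟩

lemma intervalIntegrable_inv_sqrt_one_sub :
    IntervalIntegrable (fun t : ℝ => (√(1 - t))⁻¹) volume 0 1 := by
  have hrpow : IntervalIntegrable (fun t : ℝ => (1 - t) ^ (-(1 / 2) : ℝ)) volume 0 1 := by
    simpa using ((intervalIntegral.intervalIntegrable_rpow' (a := 0) (b := 1)
      (r := -(1 / 2)) (by norm_num)).comp_sub_left 1).symm
  refine hrpow.congr fun t ht => ?_
  rw [uIoc_of_le zero_le_one] at ht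
  rw [rpow_neg (by linarith [ht.2]), sqrt_eq_rpow]

lemma one_sub_sq_mul_sq_pos {x t : ℝ} (hx : |x| < 1) (ht : |t| ≤ 1) : 0 < 1 - x ^ 2 * t ^ 2 := by
  have hx2 : x ^ 2 < 1 := sq_lt_one_iff_abs_lt_one x |>.mpr hx
  have ht2 : t ^ 2 ≤ 1 := sq_le_one_iff_abs_le_one t |>.mpr ht
  nlinarith [sq_nonneg x]

lemma norm_sqrt_div_one_sub_sq_le {x t : ℝ} (hx : |x| ≤ 1) (ht : t ∈ Ico (0 : ℝ) 1) :
    ‖√((1 - x ^ 2 * t ^ 2) / (1 - t ^ 2))‖ ≤ (√(1 - t))⁻¹ := by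
  obtain ⟨ht0, ht1⟩ := ht
  have hx2 : x ^ 2 ≤ 1 := sq_le_one_iff_abs_le_one x |>.mpr hx
  rw [norm_of_nonneg (sqrt_nonneg _), ← sqrt_inv]
  apply sqrt_le_sqrt
  rw [div_le_iff₀ (by nlinarith), inv_mul_eq_div, le_div_iff₀ (by linarith)]
  nlinarith [mul_nonneg (sq_nonneg x) (sq_nonneg t), mul_nonneg ht0 (sub_nonneg.2 ht1.le),
    mul_nonneg (mul_nonneg (sq_nonneg x) (sq_nonneg t)) (sub_nonneg.2 ht1.le)]

lemma intervalIntegrable_sqrt_div_one_sub_sq {x : ℝ} (hx : |x| ≤ 1) :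
    IntervalIntegrable (fun t => √((1 - x ^ 2 * t ^ 2) / (1 - t ^ 2))) volume 0 1 :=
  intervalIntegrable_inv_sqrt_one_sub.mono_fun' (by fun_prop : Measurable _).aestronglyMeasurable <|
    (ae_restrict_iff' measurableSet_uIoc).2 <| (ae_mem_Ioo_of_mem_uIoc zero_le_one).mono
      fun _ ht hti => norm_sqrt_div_one_sub_sq_le hx (Ioo_subset_Ico_self (ht hti))

noncomputable def ellEIntegrandDeriv (x t : ℝ) : ℝ :=
  -(x * t ^ 2) / (√(1 - x ^ 2 * t ^ 2) * √(1 - t ^ 2))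

lemma hasDerivAt_sqrt_div_one_sub_sq {x t : ℝ} (hx : |x| < 1) (ht : |t| < 1) :
    HasDerivAt (fun y => √((1 - y ^ 2 * t ^ 2) / (1 - t ^ 2))) (ellEIntegrandDeriv x t) x := by
  have hxt := one_sub_sq_mul_sq_pos hx ht.le
  have ht2 : 0 < 1 - t ^ 2 := sub_pos.2 ((sq_lt_one_iff_abs_lt_one t).2 ht)
  simp_rw [sqrt_div' _ ht2.le]
  have hinner : HasDerivAt (fun y : ℝ => 1 - y ^ 2 * t ^ 2) (-(2 * x * t ^ 2)) x := by
    simpa using ((hasDerivAt_pow 2 x).mul_const (t ^ 2)).const_sub 1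
  refine ((hinner.sqrt hxt.ne').div_const √(1 - t ^ 2)).congr_deriv ?_
  rw [ellEIntegrandDeriv]
  field_simp

lemma norm_ellEIntegrandDeriv_le {x t M : ℝ} (hxM : |x| ≤ M) (hM : M < 1)
    (ht : t ∈ Ico (0 : ℝ) 1) :
    ‖ellEIntegrandDeriv x t‖ ≤ M / √(1 - M ^ 2) * (√(1 - t))⁻¹ := by
  obtain ⟨ht0, ht1⟩ := ht
  have hx2 : x ^ 2 ≤ M ^ 2 := sq_le_sq' (abs_le.mp hxM).1 (abs_le.mp hxM).2
  have hM2 : 0 < 1 - M ^ 2 := by nlinarith [abs_nonneg x]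
  have ht2 : t ^ 2 ≤ 1 := by nlinarith
  have hxt : 0 < 1 - x ^ 2 * t ^ 2 := by nlinarith [mul_le_mul hx2 ht2 (sq_nonneg t) (sq_nonneg M)]
  have hden : 0 < √(1 - x ^ 2 * t ^ 2) * √(1 - t ^ 2) := by
    have : 0 < 1 - t ^ 2 := by nlinarith
    positivity
  rw [ellEIntegrandDeriv, norm_eq_abs, abs_div, abs_neg, abs_mul, abs_of_nonneg (sq_nonneg t),
    abs_of_pos hden, ← div_eq_mul_inv, div_div]
  apply div_le_div₀ (by linarith [abs_nonneg x]) (by nlinarith [abs_nonneg x]) (by positivity)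
  gcongr
  · nlinarith [mul_le_mul hx2 ht2 (sq_nonneg t) (sq_nonneg M)]
  · nlinarith

lemma one_div_sqrt_eq_sub_mul_ellEIntegrandDeriv {x t : ℝ} (hx : |x| < 1) (ht : |t| < 1) :
    1 / √((1 - t ^ 2) * (1 - x ^ 2 * t ^ 2)) =
      √((1 - x ^ 2 * t ^ 2) / (1 - t ^ 2)) - x * ellEIntegrandDeriv x t := by
  have hxt := one_sub_sq_mul_sq_pos hx ht.le
  have ht2 : 0 < 1 - t ^ 2 := sub_pos.2 ((sq_lt_one_iff_abs_lt_one t).2 ht)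
  have hsq := sq_sqrt hxt.le
  have ha : √(1 - x ^ 2 * t ^ 2) ≠ 0 := (sqrt_pos.2 hxt).ne'
  have hb : √(1 - t ^ 2) ≠ 0 := (sqrt_pos.2 ht2).ne'
  rw [ellEIntegrandDeriv, sqrt_div' _ ht2.le, sqrt_mul ht2.le]
  generalize √(1 - x ^ 2 * t ^ 2) = a at *
  generalize √(1 - t ^ 2) = b at *
  field_simp
  linear_combination (-1 : ℝ) * hsq

/-- dE/dk = (E(k) - K(k))/k for k ∈ (0,1). -/
theorem ellE_hasDerivAt (k : ℝ) (hk : k ∈ Set.Ioo (0:ℝ) 1) :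
    HasDerivAt ellE ((ellE k - ellK k) / k) k := by
  obtain ⟨hk0, hk1⟩ := hk
  have hk_abs : |k| < 1 := (abs_of_pos hk0).trans_lt hk1
  have hball : ∀ x ∈ Metric.ball k ((1 - k) / 2), |x| ≤ (1 + k) / 2 := fun x hx => by
    rw [Metric.mem_ball, dist_eq, abs_lt] at hx
    exact abs_le.2 ⟨by linarith, by linarith⟩
  have hIoo := ae_mem_Ioo_of_mem_uIoc (μ := volume) zero_le_one
  have habs : ∀ t ∈ Ioo (0 : ℝ) 1, |t| < 1 := fun t ht => abs_lt.2 ⟨by linarith [ht.1], ht.2⟩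
  have hEint := intervalIntegrable_sqrt_div_one_sub_sq hk_abs.le
  obtain ⟨hF'int, hderiv⟩ := intervalIntegral.hasDerivAt_integral_of_dominated_loc_of_deriv_le
    (F' := ellEIntegrandDeriv) (Metric.ball_mem_nhds k (by linarith))
    (.of_forall fun x => (by fun_prop : Measurable _).aestronglyMeasurable) hEint
    (by unfold ellEIntegrandDeriv; fun_prop : Measurable _).aestronglyMeasurable
    (hIoo.mono fun t ht hti x hx =>
      norm_ellEIntegrandDeriv_le (hball x hx) (by linarith) (Ioo_subset_Ico_self (ht hti)))
    (intervalIntegrable_inv_sqrt_one_sub.const_mul _)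
    (hIoo.mono fun t ht hti x hx => hasDerivAt_sqrt_div_one_sub_sq
      ((hball x hx).trans_lt (by linarith)) (habs t (ht hti)))
  have hK : ellK k = ellE k - k * ∫ t in (0:ℝ)..1, ellEIntegrandDeriv k t := by
    rw [ellE, ← intervalIntegral.integral_const_mul,
      ← intervalIntegral.integral_sub hEint (hF'int.const_mul k), ellK]
    refine intervalIntegral.integral_congr_ae (hIoo.mono fun t ht hti => ?_)
    exact one_div_sqrt_eq_sub_mul_ellEIntegrandDeriv hk_abs (habs t (ht hti))
  rw [hK, sub_sub_cancel, mul_div_cancel_left₀ _ hk0.ne']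
  exact hderiv
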